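/- arXiv:1702.06723 — 9 statements merged into one kernel-verified Lean document; each statement's English description precedes it below -/
import Mathlib

section
/- Let φ be a 2SAT formula on n variables. If for some variable index i the implication graph of φ contains both a directed path from the literal x_i to the literal ¬x_i and a directed path from ¬x_i to x_i, then φ is unsatisfiable. -/
/-- If for some variable index `i` the implication graph of the 2SAT
formula `φ` contains a directed path from `x_i` (the literal `(i, true)`) to `¬x_i`
(the literal `(i, false)`) and a directed path from `¬x_i` to `x_i`, then `φ` is
unsatisfiable. -/
theorem stmt_2 (n : ℕ) (hn : 1 ≤ n)
    (φ : Finset (Sym2 (Fin n × Bool)))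
    (hclauses : ∀ C ∈ φ, ¬ (Sym2.map Prod.fst C).IsDiag)
    (i : Fin n)
    (h₁ : Relation.ReflTransGen (fun a b => s((a.1, !a.2), b) ∈ φ)
            (i, true) (i, false))
    (h₂ : Relation.ReflTransGen (fun a b => s((a.1, !a.2), b) ∈ φ)
            (i, false) (i, true)) :
    ¬ ∃ σ : Fin n → Bool, ∀ C ∈ φ, ∃ l ∈ C, σ l.1 = l.2 := by
  rintro ⟨σ, hσ⟩
  have key : ∀ a b : Fin n × Bool,
      Relation.ReflTransGen (fun a b => s((a.1, !a.2), b) ∈ φ) a b →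
      σ a.1 = a.2 → σ b.1 = b.2 := by
    intro a b hab
    induction hab with
    | refl => exact id
    | tail _ hedge ih =>
      intro ha
      obtain ⟨l, hl, hlt⟩ := hσ _ hedge
      rw [Sym2.mem_iff] at hl
      rcases hl with rfl | rfl
      · simp only at hlt
        rw [ih ha] at hlt
        simp at hlt
      · exact hlt
  rcases h : σ i with _ | _
  · have := key _ _ h₂ h
    simp [h] at this
  · have := key _ _ h₁ h
    simp [h] at this
end

section
/- Let φ be a 2SAT formula on n variables. If φ is unsatisfiable, then there exists a variable index i such that the implication graph of φ contains both a directed path from the literal x_i to the literal ¬x_i and a directed path from ¬x_i to x_i. -/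
def Lit (n : ℕ) (_φ : Finset (Sym2 (Fin n × Bool))) : Type := Fin n × Bool

instance litPreorder (n : ℕ) (φ : Finset (Sym2 (Fin n × Bool))) : Preorder (Lit n φ) where
  le a b := Relation.ReflTransGen
    (fun a b : Fin n × Bool => s((a.1, !a.2), b) ∈ φ) a b
  le_refl _ := .refl
  le_trans _ _ _ := Relation.ReflTransGen.trans

theorem lit_le_iff (n : ℕ) (φ : Finset (Sym2 (Fin n × Bool))) (a b : Lit n φ) :
    a ≤ b ↔ Relation.ReflTransGen
      (fun a b : Fin n × Bool => s((a.1, !a.2), b) ∈ φ) a b := Iff.rfl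

noncomputable def litRank (n : ℕ) (φ : Finset (Sym2 (Fin n × Bool)))
    (l : Lit n φ) : LinearExtension (Antisymmetrization (Lit n φ) (· ≤ ·)) :=
  toLinearExtension (toAntisymmetrization (· ≤ ·) l)

theorem litRank_mono (n : ℕ) (φ : Finset (Sym2 (Fin n × Bool)))
    {a b : Lit n φ} (h : a ≤ b) : litRank n φ a ≤ litRank n φ b :=
  toLinearExtension.monotone (toAntisymmetrization_le_toAntisymmetrization_iff.mpr h)

theorem tlext_inj {α : Type*} [PartialOrder α] :
    Function.Injective (toLinearExtension (α := α)) := fun _ _ h => h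

theorem litRank_le (n : ℕ) (φ : Finset (Sym2 (Fin n × Bool)))
    {a b : Lit n φ} (h : litRank n φ a = litRank n φ b) : a ≤ b := by
  unfold litRank at h
  exact toAntisymmetrization_le_toAntisymmetrization_iff.mp (tlext_inj h).le

/-- If the 2SAT formula `φ` is unsatisfiable, then there exists a
variable index `i` such that the implication graph of `φ` contains both a directed
path from `x_i` (the literal `(i, true)`) to `¬x_i` (the literal `(i, false)`)
and a directed path from `¬x_i` to `x_i`. -/
theorem stmt_3 (n : ℕ) (hn : 1 ≤ n)
    (φ : Finset (Sym2 (Fin n × Bool)))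
    (hclauses : ∀ C ∈ φ, ¬ (Sym2.map Prod.fst C).IsDiag)
    (hunsat : ¬ ∃ σ : Fin n → Bool, ∀ C ∈ φ, ∃ l ∈ C, σ l.1 = l.2) :
    ∃ i : Fin n,
      Relation.ReflTransGen (fun a b => s((a.1, !a.2), b) ∈ φ)
        (i, true) (i, false) ∧
      Relation.ReflTransGen (fun a b => s((a.1, !a.2), b) ∈ φ)
        (i, false) (i, true) := by
  classical
  by_contra hcon
  push_neg at hcon
  apply hunsat
  set step : Fin n × Bool → Fin n × Bool → Prop :=
    fun a b => s((a.1, !a.2), b) ∈ φ with hstepdef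
  set R : Fin n × Bool → Fin n × Bool → Prop := Relation.ReflTransGen step with hRdef
  have hleR : ∀ a b : Lit n φ, a ≤ b ↔ R a b := by
    intro a b; rw [hRdef, hstepdef]; exact lit_le_iff n φ a b
  have hskewstep : ∀ a b : Fin n × Bool, step a b → step (b.1, !b.2) (a.1, !a.2) := by
    intro a b h
    show s(((b.1, !b.2).1, !(b.1, !b.2).2), (a.1, !a.2)) ∈ φ
    simp only [Bool.not_not]
    rw [Sym2.eq_swap]
    exact h
  have hskew : ∀ a b : Fin n × Bool, R a b → R (b.1, !b.2) (a.1, !a.2) := by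
    intro a b h
    rw [hRdef] at h ⊢
    induction h with
    | refl => exact .refl
    | tail _ hstep ih => exact Relation.ReflTransGen.head (hskewstep _ _ hstep) ih
  set g : Fin n × Bool → LinearExtension (Antisymmetrization (Lit n φ) (· ≤ ·)) :=
    fun l => litRank n φ l with hgdef
  have hgmono : ∀ a b : Fin n × Bool, R a b → g a ≤ g b := by
    intro a b h
    exact litRank_mono n φ ((hleR a b).mpr h)
  have hne : ∀ l : Fin n × Bool, g l ≠ g (l.1, !l.2) := by
    rintro ⟨i, b⟩ h
    have h2a := (hleR _ _).mp (litRank_le n φ h)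
    have h2b := (hleR _ _).mp (litRank_le n φ h.symm)
    cases b
    · exact hcon i h2b h2a
    · exact hcon i h2a h2b
  set F : Fin n × Bool → Prop := fun l => g (l.1, !l.2) < g l with hFdef
  have hFneg : ∀ l : Fin n × Bool, ¬ F l ↔ F (l.1, !l.2) := by
    rintro ⟨i, b⟩
    rw [hFdef]
    simp only [Bool.not_not]
    constructor
    · intro h
      exact lt_of_le_of_ne (not_lt.mp h) (hne (i, b))
    · intro h h2
      exact absurd h (not_lt.mpr h2.le)
  set σ : Fin n → Bool := fun i => if F (i, true) then true else false with hσdef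
  have hkey : ∀ l : Fin n × Bool, σ l.1 = l.2 ↔ F l := by
    rintro ⟨i, b⟩
    have h1 : ¬ F (i, true) ↔ F (i, false) := hFneg (i, true)
    show (if F (i, true) then true else false) = b ↔ F (i, b)
    by_cases hc : F (i, true) <;> cases b <;> simp [hc] <;> tauto
  refine ⟨σ, ?_⟩
  intro C hC
  induction C using Sym2.ind with
  | _ u v =>
    suffices h : F u ∨ F v by
      rcases h with h | h
      · exact ⟨u, Sym2.mem_mk_left u v, (hkey u).mpr h⟩
      · exact ⟨v, Sym2.mem_mk_right u v, (hkey v).mpr h⟩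
    by_contra h
    push_neg at h
    have hu := (hFneg u).mp h.1
    have hv := (hFneg v).mp h.2
    rw [hFdef] at hu hv
    simp only [Bool.not_not] at hu hv
    -- hu : g u < g (u.1, !u.2), hv : g v < g (v.1, !v.2)
    have e1 : step (u.1, !u.2) v := by
      show s(((u.1, !u.2).1, !(u.1, !u.2).2), v) ∈ φ
      simp only [Bool.not_not]
      exact hC
    have r1 : R (u.1, !u.2) v := by rw [hRdef]; exact Relation.ReflTransGen.single e1
    have r2 : R (v.1, !v.2) u := by
      have := hskew _ _ r1
      simpa only [Bool.not_not] using this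
    have c1 : g (v.1, !v.2) ≤ g u := hgmono _ _ r2
    have c2 : g (u.1, !u.2) ≤ g v := hgmono _ _ r1
    exact absurd (((c1.trans_lt hu).trans_le c2).trans hv) (lt_irrefl _)
end

section
/- Let φ be an unsatisfiable 2SAT formula on n variables. Then for every point z = (y, x) of the polytope Q_n, the inner product ⟨c_φ, y⟩ is at most m(φ) − 1, where m(φ) is the number of clauses of φ. -/
/-- A 2SAT clause on `n` variables: an unordered pair of literals on distinct
variables. A literal is a pair `(i, b) : Fin n × Bool`, where `(i, true)` stands
for `x_i` and `(i, false)` for `¬x_i`. -/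
abbrev Clause (n : ℕ) := {C : Sym2 (Fin n × Bool) // ¬ (Sym2.map Prod.fst C).IsDiag}

/-- `σ` satisfies the formula `φ` if every clause of `φ` contains a literal made
true by `σ`. -/
def Satisfies {n : ℕ} (φ : Finset (Clause n)) (σ : Fin n → Bool) : Prop :=
  ∀ C ∈ φ, ∃ l ∈ C.1, σ l.1 = l.2

/-- The 0/1 encoding `y^φ` of a formula `φ`. -/
def yVec {n : ℕ} (φ : Finset (Clause n)) : Clause n → ℝ :=
  fun C => if C ∈ φ then 1 else 0

/-- The 0/1 encoding `x^σ` of an assignment `σ`. -/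
def xVec {n : ℕ} (σ : Fin n → Bool) : Fin n → ℝ :=
  fun i => if σ i then 1 else 0

/-- The set `S` of all pairs (encoded formula, encoded satisfying assignment). -/
def SatSet (n : ℕ) : Set ((Clause n → ℝ) × (Fin n → ℝ)) :=
  {p | ∃ (ψ : Finset (Clause n)) (σ : Fin n → Bool), Satisfies ψ σ ∧ p = (yVec ψ, xVec σ)}

/-- The polytope `Q_n`, the convex hull of `S`. -/
def Qn (n : ℕ) : Set ((Clause n → ℝ) × (Fin n → ℝ)) :=
  convexHull ℝ (SatSet n)

/-- The objective vector `c_φ`: `+1` on clauses of `φ`, `-1` elsewhere. -/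
def cVec {n : ℕ} (φ : Finset (Clause n)) : Clause n → ℝ :=
  fun C => if C ∈ φ then 1 else -1

/-- If the 2SAT formula `φ` on `n ≥ 2` variables is unsatisfiable,
then for every point `z = (y, x)` of `Q_n`, the inner product `⟨c_φ, y⟩` is at most
`m(φ) - 1`, where `m(φ)` is the number of clauses of `φ`. -/
theorem stmt_4 (n : ℕ) (hn : 2 ≤ n) (φ : Finset (Clause n))
    (hunsat : ¬ ∃ σ : Fin n → Bool, Satisfies φ σ)
    (z : (Clause n → ℝ) × (Fin n → ℝ)) (hz : z ∈ Qn n) :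
    ∑ C : Clause n, cVec φ C * z.1 C ≤ (φ.card : ℝ) - 1 := by
  have key : ∀ p ∈ SatSet n, ∑ C : Clause n, cVec φ C * p.1 C ≤ (φ.card : ℝ) - 1 := by
    rintro p ⟨ψ, σ, hsat, rfl⟩
    have hφψ : ¬ φ ⊆ ψ := fun h => hunsat ⟨σ, fun C hC => hsat C (h hC)⟩
    have hss : ψ ∩ φ ⊂ φ := by
      constructor
      · exact Finset.inter_subset_right
      · intro h
        exact hφψ (fun C hC => (Finset.mem_inter.mp (h hC)).1)
    have hcard : (ψ ∩ φ).card < φ.card := Finset.card_lt_card hss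
    calc ∑ C : Clause n, cVec φ C * (yVec ψ, xVec σ).1 C
        = ∑ C ∈ ψ, cVec φ C := by
          simp only [yVec, mul_ite, mul_one, mul_zero]
          rw [Finset.sum_ite_mem, Finset.univ_inter]
      _ ≤ ∑ C ∈ ψ, (if C ∈ φ then (1:ℝ) else 0) :=
          Finset.sum_le_sum fun C _ => by by_cases h : C ∈ φ <;> simp [cVec, h]
      _ = ((ψ ∩ φ).card : ℝ) := by rw [Finset.sum_ite_mem]; simp
      _ ≤ (φ.card : ℝ) - 1 := by
          have : ((ψ ∩ φ).card : ℝ) + 1 ≤ (φ.card : ℝ) := by exact_mod_cast hcard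
          linarith
  have hconv : Convex ℝ {p : (Clause n → ℝ) × (Fin n → ℝ) |
      ∑ C : Clause n, cVec φ C * p.1 C ≤ (φ.card : ℝ) - 1} := by
    apply convex_halfSpace_le
    constructor
    · intro p q
      simp [mul_add, Finset.sum_add_distrib]
    · intro c p
      simp [Finset.mul_sum, smul_eq_mul, mul_left_comm]
  exact convexHull_min key hconv hz
end

section
/- Let φ be a satisfiable 2SAT formula on n variables. Then the maximum of ⟨c_φ, y⟩ over all points z = (y, x) of the polytope Q_n equals m(φ), the number of clauses of φ; in particular this maximum is attained. -/
lemma objLinear {n : ℕ} (φ : Finset (Clause n)) :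
    IsLinearMap ℝ (fun z : (Clause n → ℝ) × (Fin n → ℝ) =>
      ∑ C : Clause n, cVec φ C * z.1 C) := by
  constructor
  · intro x y
    simp [mul_add, Finset.sum_add_distrib]
  · intro c x
    simp [Finset.mul_sum, mul_left_comm]

lemma objOnSat {n : ℕ} (φ ψ : Finset (Clause n)) :
    ∑ C : Clause n, cVec φ C * yVec ψ C ≤ (φ.card : ℝ) := by
  have h1 : ∑ C : Clause n, cVec φ C * yVec ψ C = ∑ C ∈ ψ, cVec φ C := by
    simp only [yVec, mul_ite, mul_one, mul_zero]
    rw [Finset.sum_ite_mem, Finset.univ_inter]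
  rw [h1]
  calc ∑ C ∈ ψ, cVec φ C ≤ ∑ C ∈ ψ, (if C ∈ φ then (1:ℝ) else 0) := by
        apply Finset.sum_le_sum
        intro C _
        unfold cVec
        split <;> norm_num
    _ = ((ψ ∩ φ).card : ℝ) := by
        rw [Finset.sum_ite_mem]
        simp
    _ ≤ (φ.card : ℝ) := by
        exact_mod_cast Finset.card_le_card (Finset.inter_subset_right)

/-- If the 2SAT formula `φ` on `n ≥ 2` variables is satisfiable,
then the maximum of `⟨c_φ, y⟩` over all `z = (y, x) ∈ Q_n` is attained and
equals `m(φ)`, the number of clauses of `φ`. -/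
theorem stmt_5 (n : ℕ) (hn : 2 ≤ n) (φ : Finset (Clause n))
    (hsat : ∃ σ : Fin n → Bool, Satisfies φ σ) :
    IsGreatest ((fun z : (Clause n → ℝ) × (Fin n → ℝ) =>
      ∑ C : Clause n, cVec φ C * z.1 C) '' Qn n) (φ.card : ℝ) := by
  obtain ⟨σ, hσ⟩ := hsat
  constructor
  · refine ⟨(yVec φ, xVec σ), ?_, ?_⟩
    · exact subset_convexHull ℝ _ ⟨φ, σ, hσ, rfl⟩
    · show ∑ C : Clause n, cVec φ C * yVec φ C = (φ.card : ℝ)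
      rw [show ∑ C : Clause n, cVec φ C * yVec φ C
          = ∑ C : Clause n, (if C ∈ φ then (1:ℝ) else 0) by
        apply Finset.sum_congr rfl
        intro C _
        unfold cVec yVec
        split <;> simp]
      rw [Finset.sum_ite_mem, Finset.univ_inter]
      simp
  · rintro r ⟨z, hz, rfl⟩
    have hconv : Convex ℝ {z : (Clause n → ℝ) × (Fin n → ℝ) |
        ∑ C : Clause n, cVec φ C * z.1 C ≤ (φ.card : ℝ)} :=
      convex_halfSpace_le (objLinear φ) _
    have hsub : SatSet n ⊆ {z : (Clause n → ℝ) × (Fin n → ℝ) |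
        ∑ C : Clause n, cVec φ C * z.1 C ≤ (φ.card : ℝ)} := by
      rintro p ⟨ψ, τ, hτ, rfl⟩
      exact objOnSat φ ψ
    exact convexHull_min hsub hconv hz
end

section
/- Let φ be an unsatisfiable 2SAT formula on n variables, let w ∈ ℤ^n be a nonzero integer weight vector, and set W = Σ_{i=1}^n |w_i|. Then for every point z = (y, x) of the polytope Q_n, the value ⟨c_φ, y⟩ + (1/(3W))·⟨w, x⟩ is at most m(φ) − 2/3, where m(φ) is the number of clauses of φ. -/
/-
Every vertex `(y^ψ, x^σ)` of `Q_n` has `σ ⊨ ψ` while `σ ⊭ φ`, so some clause of `φ` is missing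
from `ψ`; hence `⟨c_φ, y^ψ⟩ ≤ #(φ ∩ ψ) ≤ m(φ) - 1`. The weight term contributes at most
`W / (3W) = 1/3`, so the objective is at most `m(φ) - 2/3` on every vertex, and the bound
passes to the convex hull because the objective is linear.
-/

theorem Satisfies.mono {n : ℕ} {φ ψ : Finset (Clause n)} {σ : Fin n → Bool} (h : φ ⊆ ψ)
    (hψ : Satisfies ψ σ) : Satisfies φ σ :=
  fun C hC => hψ C (h hC)

theorem card_inter_lt_of_satisfies {n : ℕ} {φ ψ : Finset (Clause n)} {σ : Fin n → Bool}
    (hφ : ¬ Satisfies φ σ) (hψ : Satisfies ψ σ) : (φ ∩ ψ).card < φ.card := by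
  refine Finset.card_lt_card (Finset.ssubset_iff_subset_ne.2 ⟨Finset.inter_subset_left, ?_⟩)
  rw [Ne, Finset.inter_eq_left]
  exact fun h => hφ (hψ.mono h)

theorem sum_cVec_mul_yVec_le_card_inter {n : ℕ} (φ ψ : Finset (Clause n)) :
    ∑ C, cVec φ C * yVec ψ C ≤ (φ ∩ ψ).card := by
  calc ∑ C, cVec φ C * yVec ψ C ≤ ∑ C, if C ∈ φ ∩ ψ then (1 : ℝ) else 0 := by
        refine Finset.sum_le_sum fun C _ => ?_
        by_cases hφ : C ∈ φ <;> by_cases hψ : C ∈ ψ <;> simp [cVec, yVec, hφ, hψ]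
    _ = (φ ∩ ψ).card := by rw [Finset.sum_ite_mem, Finset.univ_inter, Finset.sum_const, nsmul_one]

theorem sum_mul_xVec_le_sum_abs {n : ℕ} (w : Fin n → ℝ) (σ : Fin n → Bool) :
    ∑ i, w i * xVec σ i ≤ ∑ i, |w i| :=
  Finset.sum_le_sum fun i _ => by
    unfold xVec
    split_ifs
    · simpa using le_abs_self (w i)
    · simp

-- At `W = 0` the factor is Lean's `1 / 0 = 0`.
theorem one_div_three_mul_mul_le {W t : ℝ} (hW : 0 ≤ W) (ht : t ≤ W) :
    1 / (3 * W) * t ≤ 1 / 3 := by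
  rcases hW.eq_or_lt with rfl | hW
  · simp
  calc 1 / (3 * W) * t ≤ 1 / (3 * W) * W := by gcongr
    _ = 1 / 3 := by field_simp

theorem isLinearMap_sum_mul_add_mul_sum_mul {ι κ : Type*} [Fintype ι] [Fintype κ]
    (c : ι → ℝ) (a : ℝ) (d : κ → ℝ) :
    IsLinearMap ℝ fun p : (ι → ℝ) × (κ → ℝ) => ∑ i, c i * p.1 i + a * ∑ j, d j * p.2 j := by
  constructor
  · intro p q
    simp only [Prod.fst_add, Prod.snd_add, Pi.add_apply, mul_add, Finset.sum_add_distrib]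
    ring
  · intro r p
    simp only [Prod.smul_fst, Prod.smul_snd, Pi.smul_apply, smul_eq_mul, Finset.mul_sum, mul_add]
    congr 1 <;> exact Finset.sum_congr rfl fun _ _ => by ring

theorem objective_le_of_satisfies {n : ℕ} {φ ψ : Finset (Clause n)} {σ : Fin n → Bool}
    (hφ : ¬ Satisfies φ σ) (hψ : Satisfies ψ σ) (w : Fin n → ℝ) :
    ∑ C, cVec φ C * yVec ψ C + 1 / (3 * ∑ i, |w i|) * ∑ i, w i * xVec σ i
      ≤ (φ.card : ℝ) - 2 / 3 := by
  have hclauses : ∑ C, cVec φ C * yVec ψ C ≤ (φ.card : ℝ) - 1 := by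
    have := card_inter_lt_of_satisfies hφ hψ
    calc ∑ C, cVec φ C * yVec ψ C ≤ (φ ∩ ψ).card := sum_cVec_mul_yVec_le_card_inter φ ψ
      _ ≤ (φ.card : ℝ) - 1 := by
        rw [le_sub_iff_add_le]
        exact_mod_cast this
  have hweights := one_div_three_mul_mul_le (Finset.sum_nonneg fun i _ => abs_nonneg (w i))
    (sum_mul_xVec_le_sum_abs w σ)
  linarith

theorem stmt_6_general (n : ℕ) (φ : Finset (Clause n))
    (hunsat : ¬ ∃ σ : Fin n → Bool, Satisfies φ σ)
    (w : Fin n → ℤ)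
    (z : (Clause n → ℝ) × (Fin n → ℝ)) (hz : z ∈ Qn n) :
    ∑ C : Clause n, cVec φ C * z.1 C
        + (1 / (3 * ∑ i, |(w i : ℝ)|)) * ∑ i, (w i : ℝ) * z.2 i
      ≤ (φ.card : ℝ) - 2 / 3 := by
  refine convexHull_min ?_ (convex_halfSpace_le (isLinearMap_sum_mul_add_mul_sum_mul _ _ _) _) hz
  rintro _ ⟨ψ, σ, hψ, rfl⟩
  exact objective_le_of_satisfies (fun hφ => hunsat ⟨σ, hφ⟩) hψ _

/-- If the 2SAT formula `φ` on `n ≥ 2` variables is unsatisfiable,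
`w ∈ ℤ^n` is a nonzero integer weight vector and `W = Σᵢ |wᵢ|`, then for every
point `z = (y, x)` of `Q_n` we have
`⟨c_φ, y⟩ + (1/(3W))·⟨w, x⟩ ≤ m(φ) - 2/3`. -/
theorem stmt_6 (n : ℕ) (hn : 2 ≤ n) (φ : Finset (Clause n))
    (hunsat : ¬ ∃ σ : Fin n → Bool, Satisfies φ σ)
    (w : Fin n → ℤ) (hw : w ≠ 0)
    (z : (Clause n → ℝ) × (Fin n → ℝ)) (hz : z ∈ Qn n) :
    ∑ C : Clause n, cVec φ C * z.1 C
        + (1 / (3 * ∑ i, |(w i : ℝ)|)) * ∑ i, (w i : ℝ) * z.2 i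
      ≤ (φ.card : ℝ) - 2 / 3 :=
  stmt_6_general n φ hunsat w z hz
end

section
/- Let φ be a satisfiable 2SAT formula on n variables, let w ∈ ℤ^n be a nonzero integer weight vector, and set W = Σ_{i=1}^n |w_i|. Then the maximum z* over the polytope Q_n of the function (y, x) ↦ ⟨c_φ, y⟩ + (1/(3W))·⟨w, x⟩ satisfies z* ≥ m(φ) − 1/3; moreover, every point (y^ψ, x^σ) of the generating set S that attains this maximum satisfies ψ = φ, and σ is a satisfying assignment of φ of maximum weight ⟨w, x^σ⟩ among all satisfying assignments of φ. -/
/-!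
At a point `(y^ψ, x^σ)` of `S` the objective equals `m(φ) - |φ ∆ ψ| + ⟨w, x^σ⟩ / (3W)`, and the
weight term lies in `[-1/3, 1/3]`. A linear function attains its maximum over the convex hull of
the finite set `S` at a point of `S`. Since `φ` is satisfiable, that maximum is at least
`m(φ) - 1/3`, so a maximizer in `S` has `|φ ∆ ψ| < 1`, i.e. `ψ = φ`. Among the points with `ψ = φ`
only the weight term varies, and `1/(3W) > 0`.
-/

open Finset
open scoped symmDiff

theorem isLinearMap_sum_mul_add_mul_sum {ι κ : Type*} [Fintype ι] [Fintype κ]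
    (c : ι → ℝ) (k : ℝ) (d : κ → ℝ) :
    IsLinearMap ℝ fun z : (ι → ℝ) × (κ → ℝ) => ∑ i, c i * z.1 i + k * ∑ j, d j * z.2 j :=
  ((dotProductBilin ℝ ℝ c).comp (LinearMap.fst ℝ _ _)
    + k • (dotProductBilin ℝ ℝ d).comp (LinearMap.snd ℝ _ _)).isLinear

theorem IsGreatest.image_convexHull {E : Type*} [AddCommGroup E] [Module ℝ E] {f : E → ℝ}
    (hf : IsLinearMap ℝ f) {s : Set E} {a : ℝ} (h : IsGreatest (f '' s) a) :
    IsGreatest (f '' convexHull ℝ s) a := by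
  rw [hf.image_convexHull]
  exact ⟨subset_convexHull ℝ _ h.1, convexHull_min h.2 (convex_Iic a)⟩

variable {n : ℕ}

theorem satSet_finite : (SatSet n).Finite :=
  (Set.finite_range fun p : Finset (Clause n) × (Fin n → Bool) => (yVec p.1, xVec p.2)).subset
    fun _ ⟨ψ, σ, _, hp⟩ => ⟨(ψ, σ), hp.symm⟩

theorem sum_yVec (ψ : Finset (Clause n)) : ∑ C, yVec ψ C = ψ.card := by
  simp [yVec]

theorem cVec_mul_yVec (φ ψ : Finset (Clause n)) (C : Clause n) :
    cVec φ C * yVec ψ C = yVec φ C - yVec (φ ∆ ψ) C := by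
  by_cases hφ : C ∈ φ <;> by_cases hψ : C ∈ ψ <;> simp [cVec, yVec, mem_symmDiff, hφ, hψ]

theorem sum_cVec_mul_yVec (φ ψ : Finset (Clause n)) :
    ∑ C, cVec φ C * yVec ψ C = φ.card - (φ ∆ ψ).card := by
  simp only [cVec_mul_yVec, sum_sub_distrib, sum_yVec]

theorem sum_cVec_mul_yVec_self (φ : Finset (Clause n)) :
    ∑ C, cVec φ C * yVec φ C = φ.card := by
  simp [sum_cVec_mul_yVec]

theorem eq_of_card_sub_one_lt_sum_cVec_mul_yVec {φ ψ : Finset (Clause n)}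
    (h : (φ.card : ℝ) - 1 < ∑ C, cVec φ C * yVec ψ C) : ψ = φ := by
  rw [sum_cVec_mul_yVec] at h
  have hcard : (φ ∆ ψ).card < 1 := by exact_mod_cast (show ((φ ∆ ψ).card : ℝ) < 1 by linarith)
  rw [Nat.lt_one_iff, card_eq_zero, symmDiff_eq_empty] at hcard
  exact hcard.symm

theorem abs_sum_mul_xVec_le (w : Fin n → ℝ) (σ : Fin n → Bool) :
    |∑ i, w i * xVec σ i| ≤ ∑ i, |w i| := by
  refine (abs_sum_le_sum_abs _ _).trans (sum_le_sum fun i _ => ?_)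
  unfold xVec; split_ifs <;> simp

theorem abs_scaled_weight_le (w : Fin n → ℝ) (σ : Fin n → Bool) :
    |1 / (3 * ∑ i, |w i|) * ∑ i, w i * xVec σ i| ≤ 1 / 3 := by
  set W := ∑ i, |w i|
  have hW : 0 ≤ W := sum_nonneg fun i _ => abs_nonneg (w i)
  rw [abs_mul, abs_of_nonneg (by positivity)]
  calc 1 / (3 * W) * |∑ i, w i * xVec σ i| ≤ 1 / (3 * W) * W := by
        gcongr; exact abs_sum_mul_xVec_le w σ
    _ ≤ 1 / 3 := by
        rcases hW.eq_or_lt with h | h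
        · simp [← h]
        · rw [div_mul_eq_mul_div, one_mul, div_le_div_iff₀ (by positivity) (by norm_num)]; linarith

theorem stmt_7_general (n : ℕ) (φ : Finset (Clause n))
    (hsat : ∃ σ : Fin n → Bool, Satisfies φ σ)
    (w : Fin n → ℤ) (hw : w ≠ 0) :
    ∃ zstar : ℝ,
      IsGreatest ((fun z : (Clause n → ℝ) × (Fin n → ℝ) =>
          ∑ C : Clause n, cVec φ C * z.1 C
            + (1 / (3 * ∑ i, |(w i : ℝ)|)) * ∑ i, (w i : ℝ) * z.2 i) '' Qn n) zstar ∧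
      (φ.card : ℝ) - 1 / 3 ≤ zstar ∧
      ∀ (ψ : Finset (Clause n)) (σ : Fin n → Bool), Satisfies ψ σ →
        (∑ C : Clause n, cVec φ C * yVec ψ C
            + (1 / (3 * ∑ i, |(w i : ℝ)|)) * ∑ i, (w i : ℝ) * xVec σ i) = zstar →
        ψ = φ ∧ Satisfies φ σ ∧
          ∀ σ' : Fin n → Bool, Satisfies φ σ' →
            ∑ i, (w i : ℝ) * xVec σ' i ≤ ∑ i, (w i : ℝ) * xVec σ i := by
  set k : ℝ := 1 / (3 * ∑ i, |(w i : ℝ)|)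
  set f := fun z : (Clause n → ℝ) × (Fin n → ℝ) =>
    ∑ C, cVec φ C * z.1 C + k * ∑ i, (w i : ℝ) * z.2 i
  have hk : 0 < k := by
    obtain ⟨j, hj⟩ := Function.ne_iff.1 hw
    have : 0 < ∑ i, |(w i : ℝ)| := sum_pos' (fun i _ => abs_nonneg _)
      ⟨j, mem_univ j, abs_pos.2 (Int.cast_ne_zero.2 hj)⟩
    positivity
  have hval (ψ : Finset (Clause n)) (σ : Fin n → Bool) :
      f (yVec ψ, xVec σ) = ∑ C, cVec φ C * yVec ψ C + k * ∑ i, (w i : ℝ) * xVec σ i :=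
    rfl
  have hsmall (σ : Fin n → Bool) : |k * ∑ i, (w i : ℝ) * xVec σ i| ≤ 1 / 3 :=
    abs_scaled_weight_le (fun i => (w i : ℝ)) σ
  obtain ⟨σ₀, hσ₀⟩ := hsat
  obtain ⟨p, hpS, hpmax⟩ := (SatSet n).exists_max_image f satSet_finite ⟨_, φ, σ₀, hσ₀, rfl⟩
  have hlower : (φ.card : ℝ) - 1 / 3 ≤ f p := by
    have := hpmax _ ⟨φ, σ₀, hσ₀, rfl⟩
    rw [hval, sum_cVec_mul_yVec_self] at this
    linarith [(abs_le.1 (hsmall σ₀)).1]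
  refine ⟨f p, IsGreatest.image_convexHull (isLinearMap_sum_mul_add_mul_sum _ _ _)
    ⟨Set.mem_image_of_mem f hpS, Set.forall_mem_image.2 hpmax⟩, hlower, fun ψ σ hσ hopt => ?_⟩
  change f (yVec ψ, xVec σ) = f p at hopt
  obtain rfl : ψ = φ := eq_of_card_sub_one_lt_sum_cVec_mul_yVec <| by
    linarith [hval ψ σ, (abs_le.1 (hsmall σ)).2]
  refine ⟨rfl, hσ, fun σ' hσ' => ?_⟩
  have := hpmax _ ⟨ψ, σ', hσ', rfl⟩
  rw [← hopt, hval, hval, sum_cVec_mul_yVec_self] at this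
  exact le_of_mul_le_mul_left (by linarith) hk

/-- If the 2SAT formula `φ` on `n ≥ 2` variables is satisfiable,
`w ∈ ℤ^n` is a nonzero integer weight vector and `W = Σᵢ |wᵢ|`, then the maximum
`z*` over `Q_n` of `(y, x) ↦ ⟨c_φ, y⟩ + (1/(3W))·⟨w, x⟩` exists and satisfies
`z* ≥ m(φ) - 1/3`; moreover every point `(y^ψ, x^σ)` of the generating set `S`
attaining the maximum has `ψ = φ`, and `σ` is a satisfying assignment of `φ` of
maximum weight `⟨w, x^σ⟩` among all satisfying assignments of `φ`. -/
theorem stmt_7 (n : ℕ) (hn : 2 ≤ n) (φ : Finset (Clause n))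
    (hsat : ∃ σ : Fin n → Bool, Satisfies φ σ)
    (w : Fin n → ℤ) (hw : w ≠ 0) :
    ∃ zstar : ℝ,
      IsGreatest ((fun z : (Clause n → ℝ) × (Fin n → ℝ) =>
          ∑ C : Clause n, cVec φ C * z.1 C
            + (1 / (3 * ∑ i, |(w i : ℝ)|)) * ∑ i, (w i : ℝ) * z.2 i) '' Qn n) zstar ∧
      (φ.card : ℝ) - 1 / 3 ≤ zstar ∧
      ∀ (ψ : Finset (Clause n)) (σ : Fin n → Bool), Satisfies ψ σ →
        (∑ C : Clause n, cVec φ C * yVec ψ C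
            + (1 / (3 * ∑ i, |(w i : ℝ)|)) * ∑ i, (w i : ℝ) * xVec σ i) = zstar →
        ψ = φ ∧ Satisfies φ σ ∧
          ∀ σ' : Fin n → Bool, Satisfies φ σ' →
            ∑ i, (w i : ℝ) * xVec σ' i ≤ ∑ i, (w i : ℝ) * xVec σ i :=
  stmt_7_general n φ hsat w hw
end

section
/- Let φ be a satisfiable 2SAT formula on n variables. Then the set of points z = (y, x) of the polytope Q_n whose first block of coordinates equals y^φ is exactly the convex hull of the set {(y^φ, x^σ) : σ is a satisfying assignment of φ}. -/
/-- Auxiliary: the encoding `yVec` is injective. -/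
lemma yVec_inj {n : ℕ} {ψ ψ' : Finset (Clause n)} (h : yVec ψ = yVec ψ') : ψ = ψ' := by
  ext C
  have := congrFun h C
  by_cases h1 : C ∈ ψ <;> by_cases h2 : C ∈ ψ' <;> simp_all [yVec]

/-- If the 2SAT formula `φ` on `n ≥ 2` variables is satisfiable,
then the set of points `z = (y, x)` of `Q_n` with `y = y^φ` is exactly the convex
hull of `{(y^φ, x^σ) : σ satisfies φ}`. -/
theorem stmt_8 (n : ℕ) (hn : 2 ≤ n) (φ : Finset (Clause n))
    (hsat : ∃ σ : Fin n → Bool, Satisfies φ σ) :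
    {z ∈ Qn n | z.1 = yVec φ}
      = convexHull ℝ {p : (Clause n → ℝ) × (Fin n → ℝ) |
          ∃ σ : Fin n → Bool, Satisfies φ σ ∧ p = (yVec φ, xVec σ)} := by
  apply Set.Subset.antisymm
  · -- hard direction
    rintro z ⟨hzQ, hzy⟩
    rw [Qn, convexHull_eq] at hzQ
    obtain ⟨ι, t, w, p, hw₀, hw₁, hp, hcm⟩ := hzQ
    -- z = ∑ w i • p i
    have hz : z = ∑ i ∈ t, w i • p i := by
      rw [← hcm, Finset.centerMass_eq_of_sum_1 _ _ hw₁]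
    -- first coordinates
    have hz1 : ∀ C, (∑ i ∈ t, w i * (p i).1 C) = yVec φ C := by
      intro C
      have : z.1 C = yVec φ C := by rw [hzy]
      rw [hz] at this
      simpa [Prod.fst_sum, Finset.sum_apply, smul_eq_mul] using this
    -- choose ψ σ for each point
    choose ψs σs hsats hps using hp
    have hval : ∀ (i : ι) (hi : i ∈ t), (p i).1 = yVec (ψs i hi) := fun i hi => by
      rw [hps i hi]
    have h01 : ∀ (i : ι) (hi : i ∈ t) (C : Clause n),
        (p i).1 C = 0 ∨ (p i).1 C = 1 := by
      intro i hi C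
      rw [hval i hi]
      unfold yVec
      by_cases h : C ∈ ψs i hi <;> simp [h]
    -- key: positive-weight points have first block = yVec φ
    have hkey : ∀ i ∈ t, w i ≠ 0 → (p i).1 = yVec φ := by
      intro i hi hwi
      funext C
      have hwipos : 0 < w i := lt_of_le_of_ne (hw₀ i hi) (Ne.symm hwi)
      by_cases hC : C ∈ φ
      · -- yVec φ C = 1; show (p i).1 C = 1
        have hsum : ∑ j ∈ t, w j * (1 - (p j).1 C) = 0 := by
          have := hz1 C
          simp only [yVec, hC, if_pos] at this
          simp [mul_sub, Finset.sum_sub_distrib, hw₁, this]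
        have hnn : ∀ j ∈ t, 0 ≤ w j * (1 - (p j).1 C) := by
          intro j hj
          apply mul_nonneg (hw₀ j hj)
          rcases h01 j hj C with h | h <;> simp [h]
        have := (Finset.sum_eq_zero_iff_of_nonneg hnn).1 hsum i hi
        have h1 : (1 : ℝ) - (p i).1 C = 0 := by
          rcases mul_eq_zero.1 this with h | h
          · exact absurd h hwi
          · exact h
        simp [yVec, hC]
        linarith
      · have hsum : ∑ j ∈ t, w j * (p j).1 C = 0 := by
          have := hz1 C
          simpa [yVec, hC] using this
        have hnn : ∀ j ∈ t, 0 ≤ w j * (p j).1 C := by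
          intro j hj
          apply mul_nonneg (hw₀ j hj)
          rcases h01 j hj C with h | h <;> simp [h]
        have := (Finset.sum_eq_zero_iff_of_nonneg hnn).1 hsum i hi
        have h1 : (p i).1 C = 0 := by
          rcases mul_eq_zero.1 this with h | h
          · exact absurd h hwi
          · exact h
        simp [yVec, hC, h1]
    -- restrict to nonzero weights
    set t' := t.filter (fun i => w i ≠ 0) with ht'
    have hcm' : t'.centerMass w p = z := by
      rw [ht', Finset.centerMass_filter_ne_zero, hcm]
    have hsum' : ∑ i ∈ t', w i = 1 := by
      rw [ht', Finset.sum_filter_ne_zero, hw₁]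
    rw [← hcm']
    apply Finset.centerMass_mem_convexHull
    · intro i hi
      exact hw₀ i (Finset.mem_filter.1 hi).1
    · rw [hsum']; norm_num
    · intro i hi
      obtain ⟨hit, hwi⟩ := Finset.mem_filter.1 hi
      have hy := hkey i hit hwi
      have hψ : ψs i hit = φ := yVec_inj (by rw [← hval i hit, hy])
      refine ⟨σs i hit, ?_, ?_⟩
      · rw [← hψ]; exact hsats i hit
      · rw [hps i hit, hψ]
  · -- easy direction
    apply convexHull_min
    · rintro p ⟨σ, hσ, hp⟩
      constructor
      · apply subset_convexHull
        exact ⟨φ, σ, hσ, hp⟩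
      · rw [hp]
    · rintro x ⟨hxQ, hx1⟩ y ⟨hyQ, hy1⟩ a b ha hb hab
      refine ⟨(convex_convexHull ℝ _) hxQ hyQ ha hb hab, ?_⟩
      simp only [Prod.fst_add, Prod.smul_fst, hx1, hy1]
      rw [← add_smul, hab, one_smul]
end

section
/- Let V be a finite type, let s and t be distinct elements of V, and let f : V → V → ℝ be nonnegative. Suppose that for every vertex v different from s and t, Σ_u f u v = Σ_u f v u (flow conservation), and that Σ_u f s u − Σ_u f u s = 1 (unit net outflow at s). Then there is a directed path from s to t using only edges of positive flow; that is, the reflexive-transitive closure of the relation (u, v) ↦ f u v > 0 relates s to t. -/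
/-- Let `V` be a finite type, `s ≠ t` in `V`, and `f : V → V → ℝ`
nonnegative. If flow is conserved at every vertex other than `s` and `t`
(`Σ_u f u v = Σ_u f v u`) and the net outflow at `s` is one
(`Σ_u f s u − Σ_u f u s = 1`), then there is a directed path from `s` to `t`
using only edges of positive flow, i.e. the reflexive-transitive closure of
`(u, v) ↦ f u v > 0` relates `s` to `t`. -/
theorem stmt_9 {V : Type*} [Fintype V] (s t : V) (hst : s ≠ t)
    (f : V → V → ℝ) (hf : ∀ u v, 0 ≤ f u v)
    (hcons : ∀ v, v ≠ s → v ≠ t → ∑ u, f u v = ∑ u, f v u)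
    (hs : ∑ u, f s u - ∑ u, f u s = 1) :
    Relation.ReflTransGen (fun u v => 0 < f u v) s t := by
  classical
  by_contra h
  set r := fun u v => 0 < f u v with hr
  set S : Finset V := Finset.univ.filter fun v => Relation.ReflTransGen r s v with hS
  have hsS : s ∈ S := by simp only [hS, Finset.mem_filter, Finset.mem_univ, true_and]; exact Relation.ReflTransGen.refl
  have htS : t ∉ S := by simpa [hS] using h
  have hzero : ∀ v ∈ S, ∀ u ∉ S, f v u = 0 := by
    intro v hv u hu
    by_contra hne
    have hpos : 0 < f v u := lt_of_le_of_ne (hf v u) (Ne.symm hne)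
    apply hu
    simp only [hS, Finset.mem_filter, Finset.mem_univ, true_and] at hv ⊢
    exact hv.tail hpos
  have key : ∑ v ∈ S, (∑ u, f v u - ∑ u, f u v) = 1 := by
    rw [Finset.sum_eq_single s]
    · exact hs
    · intro v hv hvs
      rw [hcons v hvs (fun hvt => htS (hvt ▸ hv))]
      ring
    · intro hs'; exact absurd hsS hs'
  have hout : ∑ v ∈ S, ∑ u, f v u = ∑ v ∈ S, ∑ u ∈ S, f v u := by
    refine Finset.sum_congr rfl fun v hv => ?_
    rw [← Finset.sum_add_sum_compl S (f v)]
    have : ∑ u ∈ Sᶜ, f v u = 0 :=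
      Finset.sum_eq_zero fun u hu => hzero v hv u (Finset.mem_compl.mp hu)
    rw [this, add_zero]
  have hin : ∑ v ∈ S, ∑ u ∈ S, f u v ≤ ∑ v ∈ S, ∑ u, f u v := by
    refine Finset.sum_le_sum fun v hv => ?_
    exact Finset.sum_le_sum_of_subset_of_nonneg (Finset.subset_univ S)
      (fun u _ _ => hf u v)
  have hsym : ∑ v ∈ S, ∑ u ∈ S, f v u = ∑ v ∈ S, ∑ u ∈ S, f u v :=
    Finset.sum_comm
  rw [Finset.sum_sub_distrib] at key
  linarith
end

section
/- Every extreme point of the multicommodity flow polytope P_n has all coordinates equal to 0 or 1. -/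
open Finset

/-- A point of the multicommodity flow LP: the first component gives the flow
variables `f^k_{x_i x_j}` (as `f.1 k i j`), the second the terminal-edge flow
variables `f^i_{t_i x_i}` (as `f.2 i`). Literal indices live in `Fin (2*n)`. -/
abbrev FlowPt (n : ℕ) := (Fin (2*n) → Fin (2*n) → Fin (2*n) → ℝ) × (Fin (2*n) → ℝ)

/-- The index `n + i` taken mod `2n`, i.e. the index of the negation of literal `i`. -/
def negIdx {n : ℕ} (i : Fin (2*n)) : Fin (2*n) :=
  ⟨((i : ℕ) + n) % (2*n), Nat.mod_lt _ (Nat.lt_of_le_of_lt (Nat.zero_le _) i.isLt)⟩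

/-- The multicommodity flow polytope `P_n`: `0 ≤ f^i_{t_i x_i} ≤ 1`,
`f^k_{x_i x_j} ≥ 0`, the (nonexistent) diagonal coordinates `f^k_{x_i x_i}` are
pinned to `0`, and for all `i, k` the conservation equation
`δ_{i,k}·f^i_{t_i x_i} + Σ_{j≠i} f^k_{x_j x_i}
  = Σ_{j≠i} f^k_{x_i x_j} + δ_{n+i,k}·f^{n+i}_{t_{n+i} x_{n+i}}` holds. -/
def Pn (n : ℕ) : Set (FlowPt n) :=
  {f | (∀ i, 0 ≤ f.2 i ∧ f.2 i ≤ 1) ∧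
       (∀ k i j, 0 ≤ f.1 k i j) ∧
       (∀ k i, f.1 k i i = 0) ∧
       (∀ i k, (if i = k then f.2 i else 0) + ∑ j ∈ univ.erase i, f.1 k j i
          = ∑ j ∈ univ.erase i, f.1 k i j
            + (if negIdx i = k then f.2 (negIdx i) else 0))}

open Filter Topology

/-! Commodities do not interact, so fix a commodity `k` with arc flow `g` and value `v`.
The coordinates of an extreme point that are not at a bound are the positive arcs of `g`, and `v`
if `0 < v < 1`; no nonzero direction supported on them can preserve every conservation equation.
If `v < 1`, scaling the commodity, i.e. the direction `(g, v)`, shows `g = 0` and `v = 0`.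
If `v = 1`, a cut argument yields a simple path from `k` to `negIdx k` along positive arcs of `g`,
and the circulation `g - path` is such a direction, so `g` is the indicator of that path. -/

section Flow

variable {V : Type*} [Fintype V]

def netOutflow : (V → V → ℝ) →ₗ[ℝ] V → ℝ where
  toFun g i := ∑ j, g i j - ∑ j, g j i
  map_add' g h := by
    ext i
    simp only [Pi.add_apply, sum_add_distrib]
    ring
  map_smul' c g := by
    ext i
    simp only [Pi.smul_apply, smul_eq_mul, ← mul_sum, RingHom.id_apply]
    ring

lemma netOutflow_apply (g : V → V → ℝ) (i : V) : netOutflow g i = ∑ j, g i j - ∑ j, g j i := rfl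

variable [DecidableEq V]

def IsFlow (g : V → V → ℝ) (s t : V) (v : ℝ) : Prop :=
  netOutflow g = v • (Pi.single s 1 - Pi.single t 1)

namespace IsFlow

variable {g h : V → V → ℝ} {s m t : V} {v w : ℝ}

lemma zero (s t : V) : IsFlow (0 : V → V → ℝ) s t 0 := by
  simp [IsFlow]

lemma add_smul (hg : IsFlow g s t v) (hh : IsFlow h s t w) (c : ℝ) :
    IsFlow (g + c • h) s t (v + c * w) := by
  rw [IsFlow, map_add, map_smul, hg, hh, smul_smul, ← _root_.add_smul]

lemma sub (hg : IsFlow g s t v) (hh : IsFlow h s t w) : IsFlow (g - h) s t (v - w) := by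
  rw [IsFlow, map_sub, hg, hh, ← sub_smul]

lemma concat (hg : IsFlow g s m v) (hh : IsFlow h m t v) : IsFlow (g + h) s t v := by
  rw [IsFlow, map_add, hg, hh, ← smul_add, sub_add_sub_cancel]

end IsFlow

lemma sum_netOutflow_nonpos_of_closed {g : V → V → ℝ} (hg : ∀ i j, 0 ≤ g i j) {S : Finset V}
    (hS : ∀ i ∈ S, ∀ j ∉ S, g i j = 0) : ∑ i ∈ S, netOutflow g i ≤ 0 := by
  have hout : ∑ i ∈ S, ∑ j, g i j = ∑ i ∈ S, ∑ j ∈ S, g i j := by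
    refine sum_congr rfl fun i hi => ?_
    rw [← sum_add_sum_compl S, sum_eq_zero fun j hj => hS i hi j (mem_compl.1 hj), add_zero]
  have hin : ∑ i ∈ S, ∑ j ∈ S, g j i ≤ ∑ i ∈ S, ∑ j, g j i :=
    sum_le_sum fun i _ => sum_le_univ_sum_of_nonneg fun j => hg j i
  simp only [netOutflow_apply, sum_sub_distrib, hout]
  rw [sum_comm] at hin
  linarith

lemma reflTransGen_of_isFlow {g : V → V → ℝ} {s t : V} {v : ℝ} (hg : ∀ i j, 0 ≤ g i j)
    (hflow : IsFlow g s t v) (hv : 0 < v) :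
    Relation.ReflTransGen (fun i j => 0 < g i j) s t := by
  classical
  by_contra hreach
  set S := univ.filter (Relation.ReflTransGen (fun i j => 0 < g i j) s)
  have hclosed : ∀ i ∈ S, ∀ j ∉ S, g i j = 0 := by
    intro i hi j hj
    by_contra hij
    simp only [S, mem_filter, mem_univ, true_and] at hi hj
    exact hj (hi.tail ((hg i j).lt_of_ne' hij))
  have hsum : ∑ i ∈ S, netOutflow g i = v := by
    have hs : s ∈ S := mem_filter.2 ⟨mem_univ s, .refl⟩
    have ht : t ∉ S := fun ht => hreach (mem_filter.1 ht).2
    rw [hflow]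
    simp only [Pi.smul_apply, Pi.sub_apply, smul_eq_mul, ← mul_sum, sum_sub_distrib,
      sum_pi_single', if_pos hs, if_neg ht]
    ring
  linarith [sum_netOutflow_nonpos_of_closed hg hclosed]

end Flow

section Path

variable {V : Type*} [DecidableEq V]

def arcIndicator (x y : V) : V → V → ℝ := fun u w => if u = x ∧ w = y then 1 else 0

def pathIndicator : List V → V → V → ℝ
  | x :: y :: l => arcIndicator x y + pathIndicator (y :: l)
  | _ => 0

lemma pathIndicator_cons_cons (x y : V) (l : List V) :
    pathIndicator (x :: y :: l) = arcIndicator x y + pathIndicator (y :: l) := rfl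

lemma mem_of_pathIndicator_ne_zero {u w : V} : ∀ {l : List V}, pathIndicator l u w ≠ 0 → u ∈ l
  | [], h | [_], h => absurd rfl h
  | x :: y :: l, h => by
    rw [pathIndicator_cons_cons, Pi.add_apply, Pi.add_apply, arcIndicator] at h
    by_cases hxy : u = x ∧ w = y
    · simp [hxy.1]
    · rw [if_neg hxy, zero_add] at h
      exact List.mem_cons_of_mem _ (mem_of_pathIndicator_ne_zero h)

lemma rel_of_pathIndicator_ne_zero {r : V → V → Prop} {u w : V} :
    ∀ {l : List V}, l.IsChain r → pathIndicator l u w ≠ 0 → r u w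
  | [], _, h | [_], _, h => absurd rfl h
  | x :: y :: l, hl, h => by
    rw [List.isChain_cons_cons] at hl
    rw [pathIndicator_cons_cons, Pi.add_apply, Pi.add_apply, arcIndicator] at h
    by_cases hxy : u = x ∧ w = y
    · exact hxy.1 ▸ hxy.2 ▸ hl.1
    · rw [if_neg hxy, zero_add] at h
      exact rel_of_pathIndicator_ne_zero hl.2 h

lemma pathIndicator_eq_zero_or_one :
    ∀ {l : List V}, l.Nodup → ∀ u w, pathIndicator l u w = 0 ∨ pathIndicator l u w = 1
  | [], _, _, _ | [_], _, _, _ => Or.inl rfl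
  | x :: y :: l, hl, u, w => by
    rw [List.nodup_cons] at hl
    rw [pathIndicator_cons_cons, Pi.add_apply, Pi.add_apply, arcIndicator]
    by_cases hxy : u = x ∧ w = y
    · have : pathIndicator (y :: l) u w = 0 := by
        by_contra h
        exact hl.1 (hxy.1 ▸ mem_of_pathIndicator_ne_zero h)
      rw [if_pos hxy, this]
      norm_num
    · rw [if_neg hxy, zero_add]
      exact pathIndicator_eq_zero_or_one hl.2 u w

variable [Fintype V]

lemma isFlow_arcIndicator (x y : V) : IsFlow (arcIndicator x y) x y 1 := by
  ext i
  simp [netOutflow_apply, arcIndicator, Pi.single_apply, ite_and]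

lemma isFlow_pathIndicator (x : V) (l : List V) :
    IsFlow (pathIndicator (x :: l)) x ((x :: l).getLast (List.cons_ne_nil x l)) 1 := by
  induction l generalizing x with
  | nil => simp [IsFlow, pathIndicator]
  | cons y l ih =>
    rw [pathIndicator_cons_cons, List.getLast_cons_cons]
    exact (isFlow_arcIndicator x y).concat (ih y)

end Path

lemma List.exists_nodup_isChain_cons_of_relationReflTransGen {α : Type*} {r : α → α → Prop}
    {a b : α} (h : Relation.ReflTransGen r a b) :
    ∃ l, (a :: l).IsChain r ∧ (a :: l).getLast (List.cons_ne_nil a l) = b ∧ (a :: l).Nodup := by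
  induction h using Relation.ReflTransGen.head_induction_on with
  | refl => exact ⟨[], by simp, rfl, by simp⟩
  | @head a c hac _ ih =>
    obtain ⟨l, hchain, hlast, hnd⟩ := ih
    by_cases ha : a ∈ c :: l
    · obtain ⟨s, t, hst⟩ := List.append_of_mem ha
      simp only [hst] at hchain hlast hnd
      exact ⟨t, hchain.right_of_append, by rwa [List.getLast_append_of_ne_nil] at hlast,
        hnd.sublist (List.sublist_append_right s _)⟩
    · exact ⟨c :: l, hchain.cons (by simpa using hac), by simpa using hlast,
        List.nodup_cons.2 ⟨ha, hnd⟩⟩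

lemma eq_zero_of_mem_extremePoints_of_eventually_add_smul_mem {E : Type*} [AddCommGroup E]
    [Module ℝ E] {C : Set E} {x d : E} (hx : x ∈ C.extremePoints ℝ)
    (h : ∀ᶠ t in 𝓝 (0 : ℝ), x + t • d ∈ C) : d = 0 := by
  obtain ⟨ε, hε, hball⟩ := Metric.eventually_nhds_iff.1 h
  have hε2 : |ε / 2| < ε := by rw [abs_of_pos (by positivity)]; linarith
  have hpos := hball (y := ε / 2) (by rwa [Real.dist_0_eq_abs])
  have hneg := hball (y := -(ε / 2)) (by rwa [Real.dist_0_eq_abs, abs_neg])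
  have hseg : x ∈ openSegment ℝ (x + (ε / 2) • d) (x + (-(ε / 2)) • d) :=
    ⟨1 / 2, 1 / 2, by norm_num, by norm_num, by norm_num, by module⟩
  have := hx.2 hpos hneg hseg
  rw [add_eq_left, smul_eq_zero] at this
  exact this.resolve_left (by positivity)

lemma Real.eventually_add_mul_mem {s : Set ℝ} {a b : ℝ} (ha : a ∈ s)
    (hb : b ≠ 0 → a ∈ interior s) : ∀ᶠ t in 𝓝 (0 : ℝ), a + t * b ∈ s := by
  rcases eq_or_ne b 0 with rfl | hb0
  · simp [ha]
  · have : Tendsto (fun t : ℝ => a + t * b) (𝓝 0) (𝓝 a) :=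
      Continuous.tendsto' (by fun_prop) 0 a (by simp)
    exact this.eventually (mem_interior_iff_mem_nhds.1 (hb hb0))

section Polytope

variable {n : ℕ}

lemma negIdx_negIdx (i : Fin (2 * n)) : negIdx (negIdx i) = i := by
  ext
  simp only [negIdx, Nat.mod_add_mod]
  rw [add_assoc, ← two_mul, Nat.add_mod_right, Nat.mod_eq_of_lt i.isLt]

lemma negIdx_eq_iff {i k : Fin (2 * n)} : negIdx i = k ↔ i = negIdx k := by
  constructor <;> rintro rfl <;> simp [negIdx_negIdx]

lemma negIdx_ne (i : Fin (2 * n)) : negIdx i ≠ i := by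
  intro h
  have hi := i.isLt
  have h' : ((i : ℕ) + n) % (2 * n) = i := congrArg Fin.val h
  rcases Nat.lt_or_ge ((i : ℕ) + n) (2 * n) with hlt | hge
  · rw [Nat.mod_eq_of_lt hlt] at h'
    omega
  · rw [Nat.mod_eq_sub_mod hge, Nat.mod_eq_of_lt (by omega)] at h'
    omega

lemma mem_Pn_iff {f : FlowPt n} :
    f ∈ Pn n ↔ (∀ i, f.2 i ∈ Set.Icc 0 1) ∧ (∀ k i j, 0 ≤ f.1 k i j) ∧
      (∀ k i, f.1 k i i = 0) ∧ ∀ k, IsFlow (f.1 k) k (negIdx k) (f.2 k) := by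
  have hcons : ∀ k i, ((if i = k then f.2 i else 0) + ∑ j ∈ univ.erase i, f.1 k j i
      = ∑ j ∈ univ.erase i, f.1 k i j + (if negIdx i = k then f.2 (negIdx i) else 0)) ↔
      netOutflow (f.1 k) i = (f.2 k • (Pi.single k 1 - Pi.single (negIdx k) 1) : _ → ℝ) i := by
    intro k i
    rw [netOutflow_apply, ← add_sum_erase _ _ (mem_univ i), ← add_sum_erase _ _ (mem_univ i)]
    simp only [Pi.smul_apply, Pi.sub_apply, Pi.single_apply, smul_eq_mul, negIdx_eq_iff]
    split_ifs with hk hk' hk' <;> subst_vars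
    · exact absurd hk' (negIdx_ne _).symm
    · constructor <;> intro <;> linarith
    · rw [negIdx_negIdx]
      constructor <;> intro <;> linarith
    · constructor <;> intro <;> linarith
  simp only [IsFlow, funext_iff, ← hcons]
  exact ⟨fun ⟨h1, h2, h3, h4⟩ => ⟨h1, h2, h3, fun k i => h4 i k⟩,
    fun ⟨h1, h2, h3, h4⟩ => ⟨h1, h2, h3, fun i k => h4 k i⟩⟩

lemma eventually_add_smul_mem_Pn {f d : FlowPt n} (hf : f ∈ Pn n)
    (hd₁ : ∀ k i j, d.1 k i j ≠ 0 → 0 < f.1 k i j) (hd₂ : ∀ i, d.2 i ≠ 0 → f.2 i ∈ Set.Ioo 0 1)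
    (hd : ∀ k, IsFlow (d.1 k) k (negIdx k) (d.2 k)) :
    ∀ᶠ t in 𝓝 (0 : ℝ), f + t • d ∈ Pn n := by
  obtain ⟨hbd, hnn, hdiag, hflow⟩ := mem_Pn_iff.1 hf
  simp only [mem_Pn_iff, eventually_and, eventually_all]
  refine ⟨fun i => ?_, fun k i j => ?_, fun k i => .of_forall fun t => ?_,
    fun k => .of_forall fun t => (hflow k).add_smul (hd k) t⟩
  · exact Real.eventually_add_mul_mem (hbd i) (by rw [interior_Icc]; exact hd₂ i)
  · exact Real.eventually_add_mul_mem (s := Set.Ici 0) (hnn k i j)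
      (by rw [interior_Ici]; exact hd₁ k i j)
  · have : d.1 k i i = 0 := by_contra fun h => (hd₁ k i i h).ne' (hdiag k i)
    simp [hdiag, this]

lemma eq_zero_of_isFlow_of_mem_extremePoints {f : FlowPt n}
    (hf : f ∈ (Pn n).extremePoints ℝ) {k : Fin (2 * n)} {e : Fin (2 * n) → Fin (2 * n) → ℝ}
    {w : ℝ} (he : IsFlow e k (negIdx k) w) (he_supp : ∀ i j, e i j ≠ 0 → 0 < f.1 k i j)
    (hw : w ≠ 0 → f.2 k ∈ Set.Ioo 0 1) : e = 0 ∧ w = 0 := by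
  have hd := eq_zero_of_mem_extremePoints_of_eventually_add_smul_mem hf <|
    eventually_add_smul_mem_Pn (d := (Pi.single k e, Pi.single k w)) hf.1
      (fun k' i j h => by
        rcases eq_or_ne k' k with rfl | hk
        · exact he_supp i j (by simpa using h)
        · simp [hk] at h)
      (fun i h => by
        rcases eq_or_ne i k with rfl | hk
        · exact hw (by simpa using h)
        · simp [hk] at h)
      (fun k' => by
        rcases eq_or_ne k' k with rfl | hk
        · simpa using he
        · simpa [hk] using IsFlow.zero k' (negIdx k'))
  simpa [Prod.mk_eq_zero, Pi.single_eq_zero_iff] using hd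

lemma commodity_eq_zero_or_one {f : FlowPt n} (hf : f ∈ (Pn n).extremePoints ℝ)
    (k : Fin (2 * n)) :
    (∀ i j, f.1 k i j = 0 ∨ f.1 k i j = 1) ∧ (f.2 k = 0 ∨ f.2 k = 1) := by
  obtain ⟨hbd, hnn, -, hflow⟩ := mem_Pn_iff.1 hf.1
  rcases (hbd k).2.lt_or_eq with hlt | hone
  · obtain ⟨he, hw⟩ := eq_zero_of_isFlow_of_mem_extremePoints hf (hflow k)
      (fun i j h => (hnn k i j).lt_of_ne' h) (fun h => ⟨(hbd k).1.lt_of_ne' h, hlt⟩)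
    exact ⟨fun i j => Or.inl (congrFun (congrFun he i) j), Or.inl hw⟩
  · obtain ⟨l, hchain, hlast, hnd⟩ := List.exists_nodup_isChain_cons_of_relationReflTransGen <|
      reflTransGen_of_isFlow (hnn k) (hflow k) (hone ▸ one_pos)
    have hpath : IsFlow (pathIndicator (k :: l)) k (negIdx k) (f.2 k) :=
      hone ▸ hlast ▸ isFlow_pathIndicator k l
    obtain ⟨he, -⟩ := eq_zero_of_isFlow_of_mem_extremePoints hf ((hflow k).sub hpath)
      (fun i j h => by
        by_cases hp : pathIndicator (k :: l) i j = 0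
        · simp only [Pi.sub_apply, hp, sub_zero] at h
          exact (hnn k i j).lt_of_ne' h
        · exact rel_of_pathIndicator_ne_zero (r := fun i j => 0 < f.1 k i j) hchain hp)
      (by simp)
    rw [sub_eq_zero] at he
    exact ⟨fun i j => he ▸ pathIndicator_eq_zero_or_one hnd i j, Or.inr hone⟩

end Polytope

theorem stmt_10_general (n : ℕ)
    (f : FlowPt n) (hf : f ∈ Set.extremePoints ℝ (Pn n)) :
    (∀ k i j, f.1 k i j = 0 ∨ f.1 k i j = 1) ∧ (∀ i, f.2 i = 0 ∨ f.2 i = 1) :=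
  ⟨fun k => (commodity_eq_zero_or_one hf k).1, fun i => (commodity_eq_zero_or_one hf i).2⟩

/-- Every extreme point of the multicommodity flow polytope `P_n`
has all coordinates equal to `0` or `1`. -/
theorem stmt_10 (n : ℕ) (hn : 2 ≤ n)
    (f : FlowPt n) (hf : f ∈ Set.extremePoints ℝ (Pn n)) :
    (∀ k i j, f.1 k i j = 0 ∨ f.1 k i j = 1) ∧ (∀ i, f.2 i = 0 ∨ f.2 i = 1) :=
  stmt_10_general n f hf
end
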